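/- arXiv:2503.20447 — 6 statements merged into one kernel-verified Lean document; each statement's English description precedes it below -/
import Mathlib

section
/- If D ⊂ ℂ is a domain (nonempty open connected set) that is convex in the positive direction, then its Steiner symmetrization D♯ with respect to the real axis is also convex in the positive direction. -/
open Complex MeasureTheory
open scoped ENNReal

/-- A set `A ⊆ ℂ` is convex in the positive direction if `z + t ∈ A`
for every `z ∈ A` and `t ≥ 0`. -/
def ConvexPosDir (A : Set ℂ) : Prop :=
  ∀ z ∈ A, ∀ t : ℝ, 0 ≤ t → z + t ∈ A

/-- Length of the intersection of `D` with the vertical line through `x ∈ ℝ`. -/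
noncomputable def sliceLength (D : Set ℂ) (x : ℝ) : ℝ≥0∞ :=
  volume {y : ℝ | (x : ℂ) + y * Complex.I ∈ D}

/-- The Steiner symmetrization of `D ⊆ ℂ` with respect to the real axis. -/
def steiner (D : Set ℂ) : Set ℂ :=
  {z : ℂ | ENNReal.ofReal (2 * |z.im|) < sliceLength D z.re}

theorem ConvexPosDir.sliceLength_monotone {D : Set ℂ} (hD : ConvexPosDir D) :
    Monotone (sliceLength D) := by
  intro x x' hxx'
  refine measure_mono fun y hy => ?_
  have hshift := hD _ hy (x' - x) (sub_nonneg.2 hxx')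
  simp only [Set.mem_ofPred_eq, ofReal_sub] at hshift ⊢
  convert hshift using 1
  ring

theorem steiner_convexPosDir_general (D : Set ℂ) (hconv : ConvexPosDir D) :
    ConvexPosDir (steiner D) := by
  intro z hz t ht
  simp only [steiner, Set.mem_ofPred_eq, add_re, add_im, ofReal_re, ofReal_im,
    add_zero] at hz ⊢
  exact hz.trans_le (hconv.sliceLength_monotone (le_add_of_nonneg_right ht))

/-- **Lemma 3.1.** If `D` is a domain convex in the positive direction, then so is
its Steiner symmetrization. -/
theorem steiner_convexPosDir (D : Set ℂ) (hne : D.Nonempty) (hopen : IsOpen D)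
    (hconn : IsConnected D) (hconv : ConvexPosDir D) :
    ConvexPosDir (steiner D) :=
  steiner_convexPosDir_general D hconv
end

section
/- If D ⊂ ℂ is a domain (nonempty open connected set) that is convex in the positive direction, then its polarization D̂ with respect to the real axis is also a domain (open and connected) that is convex in the positive direction. -/
open Complex

/-- Reflection of a set in the real axis: `A* = {conj z : z ∈ A}`. -/
def reflectSet (A : Set ℂ) : Set ℂ := (fun z => (starRingEnd ℂ) z) '' A

/-- Polarization of `A ⊆ ℂ` with respect to the real axis:
`Â = (A ∪ A*)⁺ ∪ (A ∩ A*)⁻`. -/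
def polarization (A : Set ℂ) : Set ℂ :=
  ((A ∪ reflectSet A) ∩ {z : ℂ | 0 ≤ z.im}) ∪
    ((A ∩ reflectSet A) ∩ {z : ℂ | z.im ≤ 0})

lemma mem_reflect {D : Set ℂ} {z : ℂ} : z ∈ reflectSet D ↔ (starRingEnd ℂ) z ∈ D := by
  constructor
  · rintro ⟨w, hw, rfl⟩; simpa using hw
  · intro h; exact ⟨_, h, by simp⟩

lemma reflect_open {D : Set ℂ} (h : IsOpen D) : IsOpen (reflectSet D) := by
  have : reflectSet D = (starRingEnd ℂ) ⁻¹' D := Set.ext fun z => mem_reflect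
  rw [this]; exact h.preimage Complex.continuous_conj

lemma reflect_convex {D : Set ℂ} (h : ConvexPosDir D) : ConvexPosDir (reflectSet D) := by
  intro z hz t ht
  rw [mem_reflect] at *
  simpa [map_add] using h _ hz t ht

lemma exists_unif (D : Set ℂ) (hopen : IsOpen D) (hconv : ConvexPosDir D)
    (a b : ℝ) (h : ∀ y ∈ Set.Icc a b, ∃ p ∈ D, p.im = y) :
    ∃ X : ℝ, ∀ x : ℝ, X ≤ x → ∀ y ∈ Set.Icc a b, (x : ℂ) + y * I ∈ D := by
  classical
  have key : ∀ y ∈ Set.Icc a b, ∃ X : ℝ, ∃ ε > (0:ℝ),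
      ∀ y' ∈ Set.Ioo (y - ε) (y + ε), ∀ x : ℝ, X ≤ x → (x : ℂ) + y' * I ∈ D := by
    intro y hy
    obtain ⟨p, hp, hpy⟩ := h y hy
    obtain ⟨ε, hε, hball⟩ := Metric.isOpen_iff.1 hopen p hp
    refine ⟨p.re, ε, hε, ?_⟩
    intro y' hy' x hx
    have h1 : (p.re : ℂ) + y' * I ∈ D := by
      apply hball
      have hd : (↑p.re + ↑y' * I) - p = ((y' - p.im : ℝ)) * I := by
        nth_rewrite 2 [← Complex.re_add_im p]
        push_cast; ring
      rw [Metric.mem_ball, Complex.dist_eq, hd]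
      rw [norm_mul, Complex.norm_I, Complex.norm_real, Real.norm_eq_abs, hpy, mul_one, abs_sub_lt_iff]
      constructor <;> [linarith [hy'.2]; linarith [hy'.1]]
    have h2 := hconv _ h1 (x - p.re) (by linarith)
    have : (↑p.re + ↑y' * I) + ((x - p.re : ℝ) : ℂ) = (x : ℂ) + y' * I := by push_cast; ring
    rwa [this] at h2
  choose! X ε hε hkey using key
  have hcover : Set.Icc a b ⊆ ⋃ y ∈ Set.Icc a b, Set.Ioo (y - ε y) (y + ε y) := by
    intro y hy
    exact Set.mem_biUnion hy ⟨by linarith [hε y hy], by linarith [hε y hy]⟩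
  obtain ⟨s, hs_sub, hs_fin, hs_cov⟩ :=
    isCompact_Icc.elim_finite_subcover_image (fun i _ => isOpen_Ioo) hcover
  obtain ⟨M, hM⟩ := (hs_fin.image X).bddAbove
  refine ⟨M, ?_⟩
  intro x hx y hy
  obtain ⟨i, his, hyi⟩ := Set.mem_iUnion₂.1 (hs_cov hy)
  exact hkey i (hs_sub his) y hyi x (le_trans (hM ⟨i, his, rfl⟩) hx)

/-- **Lemma 4.2.** If `D` is a domain convex in the positive direction, then its
polarization is also a domain convex in the positive direction. -/
theorem polarization_domain_convexPosDir (D : Set ℂ) (hne : D.Nonempty)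
    (hopen : IsOpen D) (hconn : IsConnected D) (hconv : ConvexPosDir D) :
    IsOpen (polarization D) ∧ IsConnected (polarization D) ∧
      ConvexPosDir (polarization D) := by
  have hconv' : ConvexPosDir (reflectSet D) := reflect_convex hconv
  -- Openness
  have hop : IsOpen (polarization D) := by
    rw [Metric.isOpen_iff]
    rintro z (⟨hz1, hz2⟩ | ⟨hz1, hz2⟩)
    · rcases lt_or_eq_of_le (show (0:ℝ) ≤ z.im from hz2) with him | him
      · -- im z > 0
        obtain ⟨ε, hε, hball⟩ := Metric.isOpen_iff.1 (hopen.union (reflect_open hopen)) z hz1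
        refine ⟨min ε z.im, lt_min hε him, ?_⟩
        intro w hw
        have h1 : w ∈ D ∪ reflectSet D := hball (Metric.mem_ball.2 (lt_of_lt_of_le (Metric.mem_ball.1 hw) (min_le_left _ _)))
        have h2 : 0 ≤ w.im := by
          have : |w.im - z.im| < z.im := by
            calc |w.im - z.im| = |(w - z).im| := by simp
            _ ≤ ‖w - z‖ := Complex.abs_im_le_norm _
            _ < z.im := by rw [Metric.mem_ball, Complex.dist_eq] at hw; exact lt_of_lt_of_le hw (min_le_right _ _)
          rw [abs_sub_lt_iff] at this; linarith [this.2]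
        exact Or.inl ⟨h1, h2⟩
      · -- im z = 0; then z ∈ D (conj z = z)
        have hzD : z ∈ D := by
          rcases hz1 with h | h
          · exact h
          · rw [mem_reflect] at h
            rwa [Complex.conj_eq_iff_im.2 him.symm] at h
        obtain ⟨ε, hε, hball⟩ := Metric.isOpen_iff.1 hopen z hzD
        refine ⟨ε, hε, ?_⟩
        intro w hw
        have hwD : w ∈ D := hball hw
        have hwD' : w ∈ reflectSet D := by
          rw [mem_reflect]
          apply hball
          rw [Metric.mem_ball, Complex.dist_eq] at hw ⊢
          have : (starRingEnd ℂ) w - z = (starRingEnd ℂ) (w - z) := by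
            rw [map_sub, Complex.conj_eq_iff_im.2 him.symm]
          rw [this, Complex.norm_conj]
          exact hw
        rcases le_or_gt 0 w.im with h | h
        · exact Or.inl ⟨Or.inl hwD, h⟩
        · exact Or.inr ⟨⟨hwD, hwD'⟩, le_of_lt h⟩
    · rcases lt_or_eq_of_le (show z.im ≤ (0:ℝ) from hz2) with him | him
      · -- im z < 0
        obtain ⟨ε, hε, hball⟩ := Metric.isOpen_iff.1 (hopen.inter (reflect_open hopen)) z hz1
        refine ⟨min ε (-z.im), lt_min hε (by linarith), ?_⟩
        intro w hw
        have h1 : w ∈ D ∩ reflectSet D := hball (Metric.mem_ball.2 (lt_of_lt_of_le (Metric.mem_ball.1 hw) (min_le_left _ _)))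
        have h2 : w.im ≤ 0 := by
          have : |w.im - z.im| < -z.im := by
            calc |w.im - z.im| = |(w - z).im| := by simp
            _ ≤ ‖w - z‖ := Complex.abs_im_le_norm _
            _ < -z.im := by rw [Metric.mem_ball, Complex.dist_eq] at hw; exact lt_of_lt_of_le hw (min_le_right _ _)
          rw [abs_sub_lt_iff] at this; linarith [this.1]
        exact Or.inr ⟨h1, h2⟩
      · -- im z = 0, z ∈ D ∩ D* so z ∈ D
        have hzD : z ∈ D := hz1.1
        obtain ⟨ε, hε, hball⟩ := Metric.isOpen_iff.1 hopen z hzD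
        refine ⟨ε, hε, ?_⟩
        intro w hw
        have hwD : w ∈ D := hball hw
        have hwD' : w ∈ reflectSet D := by
          rw [mem_reflect]
          apply hball
          rw [Metric.mem_ball, Complex.dist_eq] at hw ⊢
          have : (starRingEnd ℂ) w - z = (starRingEnd ℂ) (w - z) := by
            rw [map_sub, Complex.conj_eq_iff_im.2 him]
          rw [this, Complex.norm_conj]
          exact hw
        rcases le_or_gt 0 w.im with h | h
        · exact Or.inl ⟨Or.inl hwD, h⟩
        · exact Or.inr ⟨⟨hwD, hwD'⟩, le_of_lt h⟩
  -- ConvexPosDir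
  have hcp : ConvexPosDir (polarization D) := by
    rintro z (⟨hz1, hz2⟩ | ⟨hz1, hz2⟩) t ht
    · refine Or.inl ⟨?_, by simpa using hz2⟩
      rcases hz1 with h | h
      · exact Or.inl (hconv _ h t ht)
      · exact Or.inr (hconv' _ h t ht)
    · exact Or.inr ⟨⟨hconv _ hz1.1 t ht, hconv' _ hz1.2 t ht⟩, by simpa using hz2⟩
  -- Connectedness
  -- The "upper" connected core U
  set φ : ℂ → ℂ := fun w => (w.re : ℂ) + |w.im| * I with hφ
  have hφcont : Continuous φ :=
    (Complex.continuous_ofReal.comp Complex.continuous_re).add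
      ((Complex.continuous_ofReal.comp (continuous_abs.comp Complex.continuous_im)).mul
        continuous_const)
  set U : Set ℂ := φ '' D with hU
  have hUconn : IsPreconnected U :=
    hconn.isPreconnected.image φ hφcont.continuousOn
  have hUsub : U ⊆ polarization D := by
    rintro _ ⟨w, hw, rfl⟩
    rcases le_or_gt 0 w.im with h | h
    · have : φ w = w := by simp only [hφ, _root_.abs_of_nonneg h, Complex.re_add_im]
      rw [this]; exact Or.inl ⟨Or.inl hw, h⟩
    · have heq : φ w = (starRingEnd ℂ) w := by
        simp only [hφ]; apply Complex.ext <;> simp [_root_.abs_of_neg h]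
      refine Or.inl ⟨Or.inr ?_, ?_⟩
      · rw [heq, mem_reflect]; simpa using hw
      · rw [heq]; simp; linarith
  have hfirstU : ∀ y : ℂ, y ∈ D ∪ reflectSet D → 0 ≤ y.im → y ∈ U := by
    intro y hy him
    rcases hy with h | h
    · exact ⟨y, h, by simp only [hφ, _root_.abs_of_nonneg him, Complex.re_add_im]⟩
    · rw [mem_reflect] at h
      refine ⟨(starRingEnd ℂ) y, h, ?_⟩
      simp only [hφ]
      apply Complex.ext <;> simp [abs_neg, _root_.abs_of_nonneg him]
  obtain ⟨d₀, hd₀⟩ := hne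
  have hx₀ : φ d₀ ∈ U := ⟨d₀, hd₀, rfl⟩
  have hpre : IsPreconnected (polarization D) := by
    apply isPreconnected_of_forall (φ d₀)
    intro y hy
    have hcase : (y ∈ D ∪ reflectSet D ∧ 0 ≤ y.im) ∨ (y ∈ D ∩ reflectSet D ∧ y.im < 0) := by
      rcases hy with ⟨h1, h2⟩ | ⟨h1, h2⟩
      · exact Or.inl ⟨h1, h2⟩
      · rcases lt_or_eq_of_le (show y.im ≤ (0:ℝ) from h2) with h | h
        · exact Or.inr ⟨h1, h⟩
        · exact Or.inl ⟨Or.inl h1.1, le_of_eq h.symm⟩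
    rcases hcase with ⟨h1, h2⟩ | ⟨h1, h2⟩
    · exact ⟨U, hUsub, hx₀, hfirstU y h1 h2, hUconn⟩
    · -- y ∈ D ∩ D*, im y < 0
      set a : ℝ := y.im with ha
      have hyD : y ∈ D := h1.1
      have hyD' : (starRingEnd ℂ) y ∈ D := mem_reflect.1 h1.2
      -- Icc a (-a) ⊆ im '' D
      have hE : IsPreconnected (Complex.im '' D) :=
        hconn.isPreconnected.image _ Complex.continuous_im.continuousOn
      have haE : a ∈ Complex.im '' D := ⟨y, hyD, rfl⟩
      have hnaE : -a ∈ Complex.im '' D := ⟨(starRingEnd ℂ) y, hyD', by simp [ha]⟩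
      have hIcc : Set.Icc a (-a) ⊆ Complex.im '' D := hE.Icc_subset haE hnaE
      obtain ⟨X₀, hX₀⟩ := exists_unif D hopen hconv a (-a) (fun t htmem => by
        obtain ⟨p, hp, hpt⟩ := hIcc htmem; exact ⟨p, hp, hpt⟩)
      set X : ℝ := max X₀ y.re with hX
      have hXX₀ : X₀ ≤ X := le_max_left _ _
      have hXre : y.re ≤ X := le_max_right _ _
      have hmemD : ∀ t ∈ Set.Icc a (-a), (X : ℂ) + t * I ∈ D := fun t htm => hX₀ X hXX₀ t htm
      have ha0 : a ≤ 0 := le_of_lt h2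
      have hIccsub : Set.Icc a 0 ⊆ Set.Icc a (-a) := Set.Icc_subset_Icc_right (by linarith)
      have hmemD' : ∀ t ∈ Set.Icc a 0, (X : ℂ) + t * I ∈ reflectSet D := by
        intro t htm
        rw [mem_reflect]
        have : (starRingEnd ℂ) ((X : ℂ) + t * I) = (X : ℂ) + (-t : ℝ) * I := by
          apply Complex.ext <;> simp
        rw [this]
        exact hmemD (-t) ⟨by linarith [htm.2], by linarith [htm.1]⟩
      set seg1 : Set ℂ := (fun x : ℝ => (x : ℂ) + a * I) '' Set.Icc y.re X with hseg1
      set seg2 : Set ℂ := (fun t : ℝ => (X : ℂ) + t * I) '' Set.Icc a 0 with hseg2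
      have hseg1conn : IsPreconnected seg1 :=
        isPreconnected_Icc.image _
          ((Complex.continuous_ofReal.add continuous_const).continuousOn)
      have hseg2conn : IsPreconnected seg2 :=
        isPreconnected_Icc.image _
          ((continuous_const.add (Complex.continuous_ofReal.mul continuous_const)).continuousOn)
      have hcorner : (X : ℂ) + a * I ∈ seg1 ∩ seg2 :=
        ⟨⟨X, ⟨hXre, le_refl X⟩, rfl⟩, ⟨a, ⟨le_refl a, ha0⟩, rfl⟩⟩
      have hsegconn : IsPreconnected (seg1 ∪ seg2) :=
        hseg1conn.union ((X : ℂ) + a * I) hcorner.1 hcorner.2 hseg2conn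
      have hXD : (X : ℂ) + (0 : ℝ) * I ∈ D := hmemD 0 ⟨ha0, by linarith⟩
      have hXU : (X : ℂ) + (0 : ℝ) * I ∈ U := hfirstU _ (Or.inl hXD) (by simp)
      have hXseg2 : (X : ℂ) + (0 : ℝ) * I ∈ seg2 := ⟨0, ⟨ha0, le_refl 0⟩, rfl⟩
      have htconn : IsPreconnected (U ∪ (seg1 ∪ seg2)) :=
        hUconn.union ((X : ℂ) + (0 : ℝ) * I) hXU (Or.inr hXseg2) hsegconn
      have hseg1sub : seg1 ⊆ polarization D := by
        rintro _ ⟨x, hx, rfl⟩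
        show ((x : ℂ) + (a : ℂ) * I) ∈ polarization D
        have heq : (x : ℂ) + (a : ℂ) * I = y + ((x - y.re : ℝ) : ℂ) := by
          apply Complex.ext <;> simp [ha]
        refine Or.inr ⟨⟨?_, ?_⟩, ?_⟩
        · rw [heq]; exact hconv _ hyD (x - y.re) (by linarith [hx.1])
        · rw [heq]; exact hconv' _ h1.2 (x - y.re) (by linarith [hx.1])
        · simp [ha0]
      have hseg2sub : seg2 ⊆ polarization D := by
        rintro _ ⟨t, ht, rfl⟩
        refine Or.inr ⟨⟨hmemD t (hIccsub ht), hmemD' t ht⟩, by simp [ht.2]⟩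
      have hysub : y ∈ seg1 := by
        refine ⟨y.re, ⟨le_refl _, hXre⟩, ?_⟩
        show (y.re : ℂ) + (a : ℂ) * I = y
        rw [ha, Complex.re_add_im]
      exact ⟨U ∪ (seg1 ∪ seg2),
        Set.union_subset hUsub (Set.union_subset hseg1sub hseg2sub),
        Or.inl hx₀, Or.inr (Or.inl hysub), htconn⟩
  refine ⟨hop, ⟨⟨φ d₀, hUsub hx₀⟩, hpre⟩, hcp⟩
end

section
/- If D ⊂ ℂ is a domain (nonempty open connected set) that is convex in the positive direction, then its Steiner symmetrization D♯ with respect to the real axis is a nonempty, open and connected subset of ℂ. -/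
open Complex MeasureTheory
open scoped ENNReal

lemma slice_mono {D : Set ℂ} (hconv : ConvexPosDir D) : Monotone (sliceLength D) := by
  intro a b hab
  apply measure_mono
  intro y hy
  have h := hconv _ hy (b - a) (by linarith)
  have : ((a : ℂ) + y * Complex.I) + ((b - a : ℝ) : ℂ) = (b : ℂ) + y * Complex.I := by
    push_cast; ring
  rwa [this] at h

lemma slice_open (D : Set ℂ) (hopen : IsOpen D) (x : ℝ) :
    IsOpen {y : ℝ | (x : ℂ) + y * Complex.I ∈ D} := by
  have : Continuous fun y : ℝ => (x : ℂ) + y * Complex.I := by continuity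
  exact hopen.preimage this

lemma real_mem_steiner {D : Set ℂ} {x : ℝ} (h : 0 < sliceLength D x) :
    (x : ℂ) ∈ steiner D := by
  simp only [steiner, Set.mem_setOf_eq, Complex.ofReal_re, Complex.ofReal_im, abs_zero,
    mul_zero, ENNReal.ofReal_zero]
  exact h

lemma steiner_open {D : Set ℂ} (hopen : IsOpen D) : IsOpen (steiner D) := by
  rw [Metric.isOpen_iff]
  intro z hz
  obtain ⟨K, hKU, hKc, hK⟩ := (slice_open D hopen z.re).exists_lt_isCompact hz
  have hKfin : volume K ≠ ⊤ := hKc.measure_lt_top.ne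
  set m := (volume K).toReal with hm
  have h2 : 2 * |z.im| < m :=
    (ENNReal.ofReal_lt_iff_lt_toReal (by positivity) hKfin).1 hK
  have hmpos : 0 < m := lt_of_le_of_lt (by positivity) h2
  -- tube lemma
  set n : Set (ℝ × ℝ) := (fun p : ℝ × ℝ => (p.1 : ℂ) + p.2 * Complex.I) ⁻¹' D with hn
  have hnop : IsOpen n := hopen.preimage (by continuity)
  have hsub : ({z.re} : Set ℝ) ×ˢ K ⊆ n := by
    rintro ⟨a, b⟩ ⟨ha, hb⟩
    simp only [Set.mem_singleton_iff] at ha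
    subst ha
    exact hKU hb
  obtain ⟨u, v, huo, hvo, hzu, hKv, huv⟩ :=
    generalized_tube_lemma isCompact_singleton hKc hnop hsub
  obtain ⟨ε₂, hε₂, hball⟩ := Metric.isOpen_iff.1 huo z.re (hzu rfl)
  refine ⟨min ε₂ ((m - 2 * |z.im|) / 2), lt_min hε₂ (by linarith), ?_⟩
  intro z' hz'
  have hdist : ‖z' - z‖ < min ε₂ ((m - 2 * |z.im|) / 2) := by rw [← dist_eq_norm]; exact hz'
  have hre : |z'.re - z.re| < ε₂ := by
    calc |z'.re - z.re| = |(z' - z).re| := by rw [Complex.sub_re]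
    _ ≤ ‖z' - z‖ := Complex.abs_re_le_norm _
    _ < ε₂ := hdist.trans_le (min_le_left _ _)
  have him : |z'.im - z.im| < (m - 2 * |z.im|) / 2 := by
    calc |z'.im - z.im| = |(z' - z).im| := by rw [Complex.sub_im]
    _ ≤ ‖z' - z‖ := Complex.abs_im_le_norm _
    _ < _ := hdist.trans_le (min_le_right _ _)
  have hKslice : K ⊆ {y : ℝ | (z'.re : ℂ) + y * Complex.I ∈ D} := by
    intro y hy
    have h1 : z'.re ∈ u := hball (show dist z'.re z.re < ε₂ by simpa [Real.dist_eq] using hre)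
    exact huv (Set.mk_mem_prod h1 (hKv hy))
  have hle : volume K ≤ sliceLength D z'.re := measure_mono hKslice
  have him2 : 2 * |z'.im| < m := by
    have : |z'.im| ≤ |z.im| + |z'.im - z.im| := by
      have := abs_add_le (z.im) (z'.im - z.im)
      simpa using this
    linarith [this, him]
  calc ENNReal.ofReal (2 * |z'.im|) < ENNReal.ofReal m :=
        (ENNReal.ofReal_lt_ofReal_iff hmpos).2 him2
    _ = volume K := ENNReal.ofReal_toReal hKfin
    _ ≤ _ := hle

/-- If `D` is a domain convex in the positive direction, then its Steiner
symmetrization is a nonempty, open and connected subset of `ℂ`. -/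
theorem steiner_domain (D : Set ℂ) (hne : D.Nonempty) (hopen : IsOpen D)
    (hconn : IsConnected D) (hconv : ConvexPosDir D) :
    (steiner D).Nonempty ∧ IsOpen (steiner D) ∧ IsConnected (steiner D) := by
  obtain ⟨z₀, hz₀⟩ := hne
  have hx₀ : 0 < sliceLength D z₀.re :=
    (slice_open D hopen z₀.re).measure_pos volume
      ⟨z₀.im, by simp [Set.mem_setOf_eq, Complex.re_add_im, hz₀]⟩
  have hS : (steiner D).Nonempty := ⟨(z₀.re : ℂ), real_mem_steiner hx₀⟩
  refine ⟨hS, steiner_open hopen, hS, ?_⟩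
  apply isPreconnected_of_forall ((z₀.re : ℂ))
  intro w hw
  have hw' : ENNReal.ofReal (2 * |w.im|) < sliceLength D w.re := hw
  have hwpos : 0 < sliceLength D w.re := lt_of_le_of_lt zero_le hw'
  set t₁ : Set ℂ := (fun θ : ℝ => (w.re : ℂ) + (((1 - θ) * w.im : ℝ) : ℂ) * Complex.I) ''
    Set.Icc (0 : ℝ) 1 with ht₁
  set t₂ : Set ℂ := (fun x : ℝ => (x : ℂ)) ''
    Set.Icc (min w.re z₀.re) (max w.re z₀.re) with ht₂
  have hminpos : 0 < sliceLength D (min w.re z₀.re) := by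
    rcases min_cases w.re z₀.re with ⟨h, -⟩ | ⟨h, -⟩ <;> rw [h] <;> assumption
  have ht₁S : t₁ ⊆ steiner D := by
    rintro p ⟨θ, hθ, rfl⟩
    have hre : ((w.re : ℂ) + (((1 - θ) * w.im : ℝ) : ℂ) * Complex.I).re = w.re := by simp
    have him : ((w.re : ℂ) + (((1 - θ) * w.im : ℝ) : ℂ) * Complex.I).im = (1 - θ) * w.im := by
      simp
    show ENNReal.ofReal (2 * |_|) < sliceLength D _
    rw [hre, him]
    refine lt_of_le_of_lt (ENNReal.ofReal_le_ofReal ?_) hw'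
    have h1 : |(1 - θ) * w.im| = |1 - θ| * |w.im| := abs_mul _ _
    have h2 : |1 - θ| ≤ 1 := by
      rw [abs_le]; constructor <;> [linarith [hθ.2]; linarith [hθ.1]]
    nlinarith [abs_nonneg w.im, abs_nonneg (1 - θ)]
  have ht₂S : t₂ ⊆ steiner D := by
    rintro p ⟨x, hx, rfl⟩
    exact real_mem_steiner (hminpos.trans_le (slice_mono hconv hx.1))
  have hwt₁ : w ∈ t₁ := ⟨0, by norm_num, by norm_num [Complex.re_add_im]⟩
  have hwret₁ : (w.re : ℂ) ∈ t₁ := ⟨1, by norm_num, by norm_num⟩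
  have hwret₂ : (w.re : ℂ) ∈ t₂ := ⟨w.re, ⟨min_le_left _ _, le_max_left _ _⟩, rfl⟩
  have hz₀t₂ : (z₀.re : ℂ) ∈ t₂ := ⟨z₀.re, ⟨min_le_right _ _, le_max_right _ _⟩, rfl⟩
  have hc₁ : IsPreconnected t₁ :=
    isPreconnected_Icc.image _ (Continuous.continuousOn (by continuity))
  have hc₂ : IsPreconnected t₂ :=
    isPreconnected_Icc.image _ (Continuous.continuousOn (by continuity))
  exact ⟨t₁ ∪ t₂, Set.union_subset ht₁S ht₂S, Set.mem_union_right _ hz₀t₂,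
    Set.mem_union_left _ hwt₁,
    hc₁.union ((w.re : ℂ)) hwret₁ hwret₂ hc₂⟩
end

section
/- The real function ψ(r) = (2/π)·arctan(2r/(1−r²)) + (4/π)·arctan((1−r)/(2√r)) is strictly decreasing on the interval (0,1), and ψ(r) → 1 as r → 1⁻. -/
open Filter Topology
open scoped Real

private lemma arctan_double {r : ℝ} (h0 : 0 < r) (h1 : r < 1) :
    Real.arctan (2 * r / (1 - r ^ 2)) = 2 * Real.arctan r := by
  have hlt : Real.arctan r < π / 4 := by
    have := Real.arctan_strictMono h1
    rwa [Real.arctan_one] at this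
  have hpos : 0 < Real.arctan r := by
    have := Real.arctan_strictMono h0
    rwa [Real.arctan_zero] at this
  have key : Real.tan (2 * Real.arctan r) = 2 * r / (1 - r ^ 2) := by
    rw [Real.tan_two_mul, Real.tan_arctan]
  rw [← key, Real.arctan_tan (by linarith [Real.pi_pos]) (by linarith)]

private lemma arctan_half {s : ℝ} (h0 : 0 < s) (h1 : s < 1) :
    Real.arctan ((1 - s ^ 2) / (2 * s)) = π / 2 - 2 * Real.arctan s := by
  have hlt : Real.arctan s < π / 4 := by
    have := Real.arctan_strictMono h1
    rwa [Real.arctan_one] at this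
  have hpos : 0 < Real.arctan s := by
    have := Real.arctan_strictMono h0
    rwa [Real.arctan_zero] at this
  have key : Real.tan (π / 2 - 2 * Real.arctan s) = (1 - s ^ 2) / (2 * s) := by
    rw [Real.tan_pi_div_two_sub, Real.tan_two_mul, Real.tan_arctan, inv_div]
  rw [← key, Real.arctan_tan] <;> linarith [Real.pi_pos]

private lemma psi_eq {r : ℝ} (h0 : 0 < r) (h1 : r < 1) :
    2 / Real.pi * Real.arctan (2 * r / (1 - r ^ 2)) +
        4 / Real.pi * Real.arctan ((1 - r) / (2 * Real.sqrt r)) =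
      2 + 4 / Real.pi * (Real.arctan ((Real.sqrt r) ^ 2) -
        2 * Real.arctan (Real.sqrt r)) := by
  set s := Real.sqrt r with hs
  have hs2 : s ^ 2 = r := Real.sq_sqrt h0.le
  have hs0 : 0 < s := Real.sqrt_pos.mpr h0
  have hs1 : s < 1 := by
    have : Real.sqrt r < Real.sqrt 1 := Real.sqrt_lt_sqrt h0.le h1
    simpa using this
  have e1 := arctan_double h0 h1
  have e2 := arctan_half hs0 hs1
  rw [hs2] at e2
  rw [e1, e2, hs2]
  have hpi : Real.pi ≠ 0 := Real.pi_ne_zero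
  field_simp
  ring

private lemma F_anti :
    StrictAntiOn (fun t : ℝ => Real.arctan (t ^ 2) - 2 * Real.arctan t)
      (Set.Ioo 0 1) := by
  apply strictAntiOn_of_deriv_neg (convex_Ioo 0 1)
  · exact ((Real.continuous_arctan.comp (continuous_pow 2)).sub
      (continuous_const.mul Real.continuous_arctan)).continuousOn
  · intro x hx
    rw [interior_Ioo] at hx
    obtain ⟨hx0, hx1⟩ := hx
    have h1 : HasDerivAt (fun t : ℝ => Real.arctan (t ^ 2))
        (1 / (1 + (x ^ 2) ^ 2) * (2 * x ^ 1)) x := by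
      have := (Real.hasDerivAt_arctan (x ^ 2)).comp x (hasDerivAt_pow 2 x)
      simpa [Function.comp_def] using this
    have h2 : HasDerivAt (fun t : ℝ => 2 * Real.arctan t)
        (2 * (1 / (1 + x ^ 2))) x := (Real.hasDerivAt_arctan x).const_mul 2
    have h3 : deriv (fun t : ℝ => Real.arctan (t ^ 2) - 2 * Real.arctan t) x = _ :=
      (h1.sub h2).deriv
    rw [h3]
    have hd1 : (0:ℝ) < 1 + (x ^ 2) ^ 2 := by positivity
    have hd2 : (0:ℝ) < 1 + x ^ 2 := by positivity
    rw [sub_neg, one_div_mul_eq_div, mul_one_div, div_lt_div_iff₀ hd1 hd2]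
    nlinarith [sq_nonneg (1 - x), sq_nonneg x, mul_pos hx0 hx0]

/-- The function `ψ(r) = (2/π) arctan(2r/(1−r²)) + (4/π) arctan((1−r)/(2√r))`
is strictly decreasing on `(0,1)` and tends to `1` as `r → 1⁻`. -/
theorem psi_strictAnti_and_tendsto :
    StrictAntiOn
      (fun r : ℝ =>
        2 / Real.pi * Real.arctan (2 * r / (1 - r ^ 2)) +
          4 / Real.pi * Real.arctan ((1 - r) / (2 * Real.sqrt r)))
      (Set.Ioo 0 1) ∧
    Tendsto
      (fun r : ℝ =>
        2 / Real.pi * Real.arctan (2 * r / (1 - r ^ 2)) +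
          4 / Real.pi * Real.arctan ((1 - r) / (2 * Real.sqrt r)))
      (nhdsWithin 1 (Set.Iio 1)) (nhds 1) := by
  constructor
  · intro a ha b hb hab
    simp only
    rw [psi_eq ha.1 ha.2, psi_eq hb.1 hb.2]
    have hsa : Real.sqrt a ∈ Set.Ioo (0:ℝ) 1 := by
      constructor
      · exact Real.sqrt_pos.mpr ha.1
      · have : Real.sqrt a < Real.sqrt 1 := Real.sqrt_lt_sqrt ha.1.le ha.2
        simpa using this
    have hsb : Real.sqrt b ∈ Set.Ioo (0:ℝ) 1 := by
      constructor
      · exact Real.sqrt_pos.mpr hb.1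
      · have : Real.sqrt b < Real.sqrt 1 := Real.sqrt_lt_sqrt hb.1.le hb.2
        simpa using this
    have hsab : Real.sqrt a < Real.sqrt b := Real.sqrt_lt_sqrt ha.1.le hab
    have hF := F_anti hsa hsb hsab
    have h4 : (0:ℝ) < 4 / Real.pi := by positivity
    have := mul_lt_mul_of_pos_left hF h4
    simp only at this
    linarith
  · have hcont : Continuous (fun r : ℝ => 2 + 4 / Real.pi *
        (Real.arctan ((Real.sqrt r) ^ 2) - 2 * Real.arctan (Real.sqrt r))) := by
      continuity
    have hval : (2 : ℝ) + 4 / Real.pi *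
        (Real.arctan ((Real.sqrt 1) ^ 2) - 2 * Real.arctan (Real.sqrt 1)) = 1 := by
      rw [Real.sqrt_one, one_pow, Real.arctan_one]
      field_simp
      ring
    have htend : Tendsto (fun r : ℝ => 2 + 4 / Real.pi *
        (Real.arctan ((Real.sqrt r) ^ 2) - 2 * Real.arctan (Real.sqrt r)))
        (nhdsWithin 1 (Set.Iio 1)) (nhds 1) := by
      have h := (hcont.tendsto 1).mono_left (nhdsWithin_le_nhds (s := Set.Iio 1))
      rwa [hval] at h
    apply htend.congr'
    have hmem : Set.Ioo (0:ℝ) 1 ∈ nhdsWithin (1:ℝ) (Set.Iio 1) :=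
      Ioo_mem_nhdsLT_of_mem (by constructor <;> norm_num)
    filter_upwards [hmem] with r hr
    exact (psi_eq hr.1 hr.2).symm
end

section
/- For every r ∈ (0,1), 1 − (2/π)·arctan(2r/(1−r²)) ≤ (4/π)·arctan((1−r)/(2√r)). -/
/-!
Put `x = √r`. By the double-angle formula `arctan (2r/(1-r²)) = 2 arctan r`, and since
`(1-r)/(2√r)` is the reciprocal of `2x/(1-x²)`, `arctan ((1-r)/(2√r)) = π/2 - 2 arctan x`.
The claim thus reduces to `2 arctan x ≤ π/4 + arctan x²`; both sides are arctangents, of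
`2x/(1-x²)` and of `(1+x²)/(1-x²)`, so it is the AM-GM inequality `2x ≤ 1 + x²`.
-/

open Real

lemma arctan_one_sub_sq_div_two_mul {x : ℝ} (hx₀ : 0 < x) (hx₁ : x < 1) :
    arctan ((1 - x ^ 2) / (2 * x)) = π / 2 - 2 * arctan x := by
  have hden : 0 < 1 - x ^ 2 := by nlinarith
  rw [← inv_div, arctan_inv_of_pos (by positivity), two_mul_arctan (by linarith) hx₁]

lemma pi_div_four_add_arctan {x : ℝ} (hx : x < 1) :
    π / 4 + arctan x = arctan ((1 + x) / (1 - x)) := by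
  rw [← arctan_one, arctan_add (by linarith), one_mul]

lemma two_mul_arctan_le_pi_div_four_add_arctan_sq {x : ℝ} (hx₀ : -1 < x) (hx₁ : x < 1) :
    2 * arctan x ≤ π / 4 + arctan (x ^ 2) := by
  have hden : 0 < 1 - x ^ 2 := by nlinarith
  rw [two_mul_arctan hx₀ hx₁, pi_div_four_add_arctan (by nlinarith)]
  apply arctan_strictMono.monotone
  gcongr
  nlinarith [sq_nonneg (1 - x)]

/-- For every `r ∈ (0,1)`,
`1 − (2/π) arctan(2r/(1−r²)) ≤ (4/π) arctan((1−r)/(2√r))`. -/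
theorem one_sub_arctan_le (r : ℝ) (hr : r ∈ Set.Ioo (0 : ℝ) 1) :
    1 - 2 / Real.pi * Real.arctan (2 * r / (1 - r ^ 2)) ≤
      4 / Real.pi * Real.arctan ((1 - r) / (2 * Real.sqrt r)) := by
  obtain ⟨hr₀, hr₁⟩ := hr
  have hx₀ : 0 < √r := sqrt_pos.mpr hr₀
  have hx₁ : √r < 1 := (sqrt_lt' one_pos).mpr (by linarith)
  have hsq : √r ^ 2 = r := sq_sqrt hr₀.le
  have key := two_mul_arctan_le_pi_div_four_add_arctan_sq (by linarith) hx₁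
  have hcompl := arctan_one_sub_sq_div_two_mul hx₀ hx₁
  rw [hsq] at key hcompl
  rw [← two_mul_arctan (by linarith) hr₁, hcompl]
  have hdiff : 4 / π * (π / 2 - 2 * arctan √r) - (1 - 2 / π * (2 * arctan r)) =
      4 / π * (π / 4 + arctan r - 2 * arctan √r) := by
    field_simp
    ring
  have : 0 ≤ 4 / π * (π / 4 + arctan r - 2 * arctan √r) :=
    mul_nonneg (by positivity) (by linarith)
  linarith
end

section
/- Let D ⊂ ℂ be a domain (nonempty open connected set) that is convex in the positive direction and satisfies D ∩ ℝ ≠ ∅. Then there exists x₀ ∈ ℝ such that the half-line {x ∈ ℝ : x ≥ x₀} is contained in D ∩ D*, and both sets (D ∪ D*) ∩ {z : Im z ≥ 0} and (D ∩ D*) ∩ {z : Im z ≤ 0} are nonempty and connected, where D* = {conj(z) : z ∈ D}. -/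
/-!
Moving to the right preserves `D`, `D*` and `D ∩ D*`, so these sets are governed by their sets of
heights, which are intervals. The upper piece is the image of the connected set `D ∪ D*` under the
fold `z ↦ re z + i |im z|`. In the lower piece, two points are joined by moving both to the right,
to a common abscissa `M`, and then vertically; a suitable `M` exists by compactness of the interval
of heights, because the open sets `{y | M + i y ∈ D ∩ D*}` increase with `M`.
-/

open Complex

open ComplexConjugate

@[fun_prop]
theorem Complex.continuous_mk {X : Type*} [TopologicalSpace X] {f g : X → ℝ}
    (hf : Continuous f) (hg : Continuous g) : Continuous fun x => (⟨f x, g x⟩ : ℂ) := by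
  have : (fun x => (⟨f x, g x⟩ : ℂ)) = fun x => (f x : ℂ) + g x * I :=
    funext fun x => Complex.ext (by simp) (by simp)
  rw [this]
  fun_prop

theorem reflectSet_eq_preimage (A : Set ℂ) : reflectSet A = starRingEnd ℂ ⁻¹' A :=
  congrFun (Set.image_eq_preimage_of_inverse conj_conj conj_conj) A

@[simp]
theorem mem_reflectSet {A : Set ℂ} {z : ℂ} : z ∈ reflectSet A ↔ conj z ∈ A := by
  rw [reflectSet_eq_preimage, Set.mem_preimage]

@[simp]
theorem reflectSet_reflectSet (A : Set ℂ) : reflectSet (reflectSet A) = A := by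
  ext z
  simp

theorem reflectSet_union (A B : Set ℂ) : reflectSet (A ∪ B) = reflectSet A ∪ reflectSet B :=
  Set.image_union _ A B

theorem IsOpen.reflectSet {A : Set ℂ} (hA : IsOpen A) : IsOpen (reflectSet A) := by
  rw [reflectSet_eq_preimage]
  exact hA.preimage continuous_conj

theorem IsConnected.reflectSet {A : Set ℂ} (hA : IsConnected A) : IsConnected (reflectSet A) :=
  hA.image _ continuous_conj.continuousOn

theorem convexPosDir_reflectSet {A : Set ℂ} (hA : ConvexPosDir A) :
    ConvexPosDir (reflectSet A) := by
  intro z hz t ht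
  simpa using hA _ (mem_reflectSet.1 hz) t ht

def foldUp (z : ℂ) : ℂ := ⟨z.re, |z.im|⟩

theorem continuous_foldUp : Continuous foldUp := by
  unfold foldUp
  fun_prop

theorem image_foldUp_of_reflectSet_eq {S : Set ℂ} (hS : reflectSet S = S) :
    foldUp '' S = S ∩ {z | 0 ≤ z.im} := by
  ext w
  constructor
  · rintro ⟨z, hz, rfl⟩
    refine ⟨?_, abs_nonneg z.im⟩
    rcases le_or_gt 0 z.im with him | him
    · convert hz
      exact Complex.ext rfl (abs_of_nonneg him)
    · rw [← hS, mem_reflectSet]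
      convert hz
      exact Complex.ext rfl (by simp [foldUp, abs_of_neg him])
  · rintro ⟨hw, him⟩
    exact ⟨w, hw, Complex.ext rfl (abs_of_nonneg him)⟩

theorem isConnected_inter_im_nonneg_of_reflectSet_eq {S : Set ℂ} (hS : IsConnected S)
    (hSS : reflectSet S = S) : IsConnected (S ∩ {z | 0 ≤ z.im}) := by
  rw [← image_foldUp_of_reflectSet_eq hSS]
  exact hS.image _ continuous_foldUp.continuousOn

namespace ConvexPosDir

variable {A B : Set ℂ}

theorem mk_mem (hA : ConvexPosDir A) {z : ℂ} (hz : z ∈ A) {x : ℝ} (hx : z.re ≤ x) :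
    (⟨x, z.im⟩ : ℂ) ∈ A := by
  convert hA z hz (x - z.re) (by linarith) using 1
  exact Complex.ext (by simp) (by simp)

theorem inter (hA : ConvexPosDir A) (hB : ConvexPosDir B) : ConvexPosDir (A ∩ B) :=
  fun z hz t ht => ⟨hA z hz.1 t ht, hB z hz.2 t ht⟩

theorem preimage_im (H : Set ℝ) : ConvexPosDir (im ⁻¹' H) := by
  intro z hz t _
  simpa using hz

theorem image_im_inter (hA : ConvexPosDir A) (hB : ConvexPosDir B) :
    im '' (A ∩ B) = im '' A ∩ im '' B := by
  refine (Set.image_inter_subset _ _ _).antisymm ?_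
  rintro y ⟨⟨a, ha, rfl⟩, ⟨b, hb, hba⟩⟩
  refine ⟨⟨max a.re b.re, a.im⟩, ⟨hA.mk_mem ha (le_max_left _ _), ?_⟩, rfl⟩
  rw [← hba]
  exact hB.mk_mem hb (le_max_right _ _)

theorem exists_forall_mk_mem (hA : ConvexPosDir A) (hAo : IsOpen A) {K : Set ℝ}
    (hK : IsCompact K) (hKA : K ⊆ im '' A) (x : ℝ) :
    ∃ M, x ≤ M ∧ ∀ y ∈ K, (⟨M, y⟩ : ℂ) ∈ A := by
  let U : ℝ → Set ℝ := fun r => {y | (⟨r, y⟩ : ℂ) ∈ A}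
  have hUo (r : ℝ) : IsOpen (U r) := hAo.preimage (by fun_prop)
  have hUmono : Monotone U := fun r s hrs y hy => hA.mk_mem hy hrs
  have hKU : K ⊆ ⋃ r, U r := by
    rintro _ hy
    obtain ⟨z, hz, rfl⟩ := hKA hy
    exact Set.mem_iUnion.2 ⟨z.re, hz⟩
  obtain ⟨r, hr⟩ := hK.elim_directed_cover U hUo hKU hUmono.directed_le
  exact ⟨max r x, le_max_right _ _, fun y hy => hUmono (le_max_left _ _) (hr hy)⟩

theorem isPreconnected_inter_preimage_im (hA : ConvexPosDir A) (hAo : IsOpen A)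
    (hAim : (im '' A).OrdConnected) {H : Set ℝ} (hH : H.OrdConnected) :
    IsPreconnected (A ∩ im ⁻¹' H) := by
  have hS : ConvexPosDir (A ∩ im ⁻¹' H) := hA.inter (preimage_im H)
  refine isPreconnected_of_forall_pair fun z hz w hw => ?_
  have hK : Set.uIcc z.im w.im ⊆ im '' A ∩ H :=
    (hAim.inter hH).uIcc_subset ⟨⟨z, hz.1, rfl⟩, hz.2⟩ ⟨⟨w, hw.1, rfl⟩, hw.2⟩
  obtain ⟨M, hM, hMA⟩ := hA.exists_forall_mk_mem hAo isCompact_uIcc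
    (hK.trans Set.inter_subset_left) (max z.re w.re)
  let horizontal (p : ℂ) : Set ℂ := (fun x : ℝ => (⟨x, p.im⟩ : ℂ)) '' Set.Icc p.re M
  let vertical : Set ℂ := (fun y : ℝ => (⟨M, y⟩ : ℂ)) '' Set.uIcc z.im w.im
  have horizontal_subset {p : ℂ} (hp : p ∈ A ∩ im ⁻¹' H) : horizontal p ⊆ A ∩ im ⁻¹' H := by
    rintro _ ⟨x, hx, rfl⟩
    exact hS.mk_mem hp hx.1
  have vertical_subset : vertical ⊆ A ∩ im ⁻¹' H := by
    rintro _ ⟨y, hy, rfl⟩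
    exact ⟨hMA y hy, (hK hy).2⟩
  have horizontal_isPreconnected (p : ℂ) : IsPreconnected (horizontal p) :=
    isPreconnected_Icc.image _ (by fun_prop)
  have mem_horizontal {p : ℂ} (hp : p.re ≤ M) : p ∈ horizontal p :=
    ⟨p.re, ⟨le_rfl, hp⟩, rfl⟩
  have corner_mem_horizontal {p : ℂ} (hp : p.re ≤ M) : (⟨M, p.im⟩ : ℂ) ∈ horizontal p :=
    ⟨M, ⟨hp, le_rfl⟩, rfl⟩
  have hzM : z.re ≤ M := (le_max_left _ _).trans hM
  have hwM : w.re ≤ M := (le_max_right _ _).trans hM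
  refine ⟨horizontal z ∪ vertical ∪ horizontal w,
    Set.union_subset (Set.union_subset (horizontal_subset hz) vertical_subset)
      (horizontal_subset hw),
    Or.inl (Or.inl (mem_horizontal hzM)), Or.inr (mem_horizontal hwM), ?_⟩
  refine IsPreconnected.union ⟨M, w.im⟩ (Or.inr ⟨w.im, Set.right_mem_uIcc, rfl⟩)
    (corner_mem_horizontal hwM) ?_ (horizontal_isPreconnected w)
  exact IsPreconnected.union ⟨M, z.im⟩ (corner_mem_horizontal hzM)
    ⟨z.im, Set.left_mem_uIcc, rfl⟩ (horizontal_isPreconnected z)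
    (isPreconnected_uIcc.image _ (by fun_prop))

end ConvexPosDir

theorem halfline_and_connected_pieces_general (D : Set ℂ)
    (hopen : IsOpen D) (hconn : IsConnected D) (hconv : ConvexPosDir D)
    (hreal : (D ∩ {z : ℂ | z.im = 0}).Nonempty) :
    (∃ x₀ : ℝ, ∀ x : ℝ, x₀ ≤ x → (x : ℂ) ∈ D ∩ reflectSet D) ∧
      IsConnected ((D ∪ reflectSet D) ∩ {z : ℂ | 0 ≤ z.im}) ∧
      IsConnected ((D ∩ reflectSet D) ∩ {z : ℂ | z.im ≤ 0}) := by
  obtain ⟨z₀, hz₀, hz₀im : z₀.im = 0⟩ := hreal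
  have hz₀E : z₀ ∈ D ∩ reflectSet D := ⟨hz₀, by simpa [conj_eq_iff_im.2 hz₀im] using hz₀⟩
  have hconvE : ConvexPosDir (D ∩ reflectSet D) := hconv.inter (convexPosDir_reflectSet hconv)
  have hhalf (x : ℝ) (hx : z₀.re ≤ x) : (x : ℂ) ∈ D ∩ reflectSet D := by
    have h := hconvE.mk_mem hz₀E hx
    rwa [hz₀im] at h
  refine ⟨⟨z₀.re, hhalf⟩, ?_, ⟨z₀, hz₀E, hz₀im.le⟩, ?_⟩
  · refine isConnected_inter_im_nonneg_of_reflectSet_eq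
      (hconn.union ⟨z₀, hz₀E⟩ hconn.reflectSet) ?_
    rw [reflectSet_union, reflectSet_reflectSet, Set.union_comm]
  · have hEim : (im '' (D ∩ reflectSet D)).OrdConnected := by
      rw [hconv.image_im_inter (convexPosDir_reflectSet hconv)]
      exact (hconn.image _ continuous_im.continuousOn).isPreconnected.ordConnected.inter
        (hconn.reflectSet.image _ continuous_im.continuousOn).isPreconnected.ordConnected
    exact hconvE.isPreconnected_inter_preimage_im (hopen.inter hopen.reflectSet) hEim
      Set.ordConnected_Iic

/-- If `D` is a domain convex in the positive direction meeting the real axis,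
then `D ∩ D*` contains a real half-line and both `(D ∪ D*)⁺` and `(D ∩ D*)⁻`
are nonempty and connected. -/
theorem halfline_and_connected_pieces (D : Set ℂ) (hne : D.Nonempty)
    (hopen : IsOpen D) (hconn : IsConnected D) (hconv : ConvexPosDir D)
    (hreal : (D ∩ {z : ℂ | z.im = 0}).Nonempty) :
    (∃ x₀ : ℝ, ∀ x : ℝ, x₀ ≤ x → (x : ℂ) ∈ D ∩ reflectSet D) ∧
      IsConnected ((D ∪ reflectSet D) ∩ {z : ℂ | 0 ≤ z.im}) ∧
      IsConnected ((D ∩ reflectSet D) ∩ {z : ℂ | z.im ≤ 0}) :=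
  halfline_and_connected_pieces_general D hopen hconn hconv hreal
end
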